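/- Let ℓ ∈ ℕ with ℓ ≥ 2, and let A, B ∈ ℂ. Fix β ∈ ℂ with β² = B. Define complex numbers ẽ₀, ẽ₁, …, ẽ_{ℓ−1} by ẽ₀ = A/ℓ, ẽ₁ = −(A²/ℓ² − B)/(ℓ−1), and, for 1 ≤ k ≤ ℓ−2, ẽ_{k+1} = −(1/(ℓ−(k+1))) Σ_{t=0}^{k} ẽ_t ẽ_{k−t}. Then −Σ_{t=0}^{ℓ−1} ẽ_t ẽ_{ℓ−1−t} = ((−1)^ℓ/(ℓ!)²) ∏_{j=0}^{ℓ} (A − (ℓ−2j)β). (Since the factors for j and ℓ−j pair up, the right-hand side is a polynomial in A and B and does not depend on the choice of the square root β.) -/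

import Mathlib

/-!
The recursion says that `E = ∑ ẽₖ xᵏ` solves the Riccati equation `x E' = ℓ E - A + x E² - B x`
up to order `x^ℓ`, and the coefficient of `x^ℓ` in its defect is the left-hand side.
Substituting `E = -β - M'/M` linearises it into Kummer's equation
`x M'' + (2 β x - ℓ) M' - (A + ℓ β) M = 0`, whose power-series solution with `M(0) = 1` has
`(n + 1)(n - ℓ) m_{n+1} = (A + (ℓ - 2n) β) m_n`. This determines `m_0, …, m_ℓ`, and at `n = ℓ`
it leaves the obstruction `(A - ℓ β) m_ℓ`, which is the product on the right.

To compare the two obstructions, put `V = (E + β) M + M'`. It satisfies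
`x V' - ℓ V - x (E - β) V = D·M + K(M)`, where `D` and `K(M)` are the Riccati and Kummer
defects. Both vanish below degree `ℓ`, so `V` does too, and the coefficient of `x^ℓ` gives
`D_ℓ = -K(M)_ℓ`.
-/

open PowerSeries Finset

namespace LameTopDegree

section CommRing

variable {R : Type*} [CommRing R]

noncomputable def riccatiDefect (ℓ : ℕ) (A B : R) (E : R⟦X⟧) : R⟦X⟧ :=
  X * d⁄dX R E - C (ℓ : R) * E + C A - X * E ^ 2 + C B * X

noncomputable def kummerOp (ℓ : ℕ) (A β : R) (M : R⟦X⟧) : R⟦X⟧ :=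
  X * d⁄dX R (d⁄dX R M) + C (2 * β) * (X * d⁄dX R M) - C (ℓ : R) * d⁄dX R M
    - C (A + ℓ * β) * M

theorem riccati_linearization (ℓ : ℕ) (A β : R) {E M V : R⟦X⟧}
    (hV : V = (E + C β) * M + d⁄dX R M) :
    X * d⁄dX R V - C (ℓ : R) * V - X * (E - C β) * V
      = riccatiDefect ℓ A (β ^ 2) E * M + kummerOp ℓ A β M := by
  subst hV
  simp only [riccatiDefect, kummerOp, map_add, map_mul, Derivation.leibniz, derivative_C,
    smul_eq_mul, map_pow, map_ofNat]
  ring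

theorem coeff_X_mul_derivative (V : R⟦X⟧) (n : ℕ) :
    coeff n (X * d⁄dX R V) = n * coeff n V := by
  cases n with
  | zero => simp
  | succ n => rw [coeff_succ_X_mul, coeff_derivative]; push_cast; ring

theorem coeff_mul_of_X_pow_dvd {n : ℕ} {f : R⟦X⟧} (h : X ^ n ∣ f) (g : R⟦X⟧) :
    coeff n (f * g) = coeff n f * constantCoeff g := by
  obtain ⟨f, rfl⟩ := h
  have hf := coeff_X_pow_mul f n 0
  have hfg := coeff_X_pow_mul (f * g) n 0
  rw [zero_add] at hf hfg
  simp only [mul_assoc, hfg, hf, coeff_zero_eq_constantCoeff_apply, map_mul]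

theorem coeff_X_mul_of_X_pow_dvd {n : ℕ} {f : R⟦X⟧} (h : X ^ n ∣ f) :
    coeff n (X * f) = 0 :=
  X_pow_dvd_iff.mp (pow_succ' (X : R⟦X⟧) n ▸ mul_dvd_mul_left X h) n n.lt_succ_self

theorem coeff_mk_sq (e : ℕ → R) (n : ℕ) :
    coeff n (mk e ^ 2) = ∑ t ∈ range (n + 1), e t * e (n - t) := by
  rw [sq, coeff_mul,
    Nat.sum_antidiagonal_eq_sum_range_succ fun i j => coeff i (mk e) * coeff j (mk e)]
  simp only [coeff_mk]

theorem coeff_zero_riccatiDefect (ℓ : ℕ) (A B : R) (E : R⟦X⟧) :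
    coeff 0 (riccatiDefect ℓ A B E) = A - ℓ * coeff 0 E := by
  rw [riccatiDefect, map_add, map_sub, map_add, map_sub, coeff_C_mul, coeff_zero_X_mul,
    coeff_zero_X_mul, coeff_zero_C, mul_comm (C B), coeff_zero_X_mul]
  ring

theorem coeff_succ_riccatiDefect (ℓ : ℕ) (A B : R) (E : R⟦X⟧) (n : ℕ) :
    coeff (n + 1) (riccatiDefect ℓ A B E)
      = (n + 1 - ℓ) * coeff (n + 1) E - coeff n (E ^ 2) + if n = 0 then B else 0 := by
  rw [riccatiDefect, map_add, map_sub, map_add, map_sub, coeff_C_mul, coeff_X_mul_derivative,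
    coeff_succ_X_mul, coeff_C, mul_comm (C B), coeff_succ_X_mul, coeff_C]
  push_cast
  ring

theorem coeff_riccatiDefect_mk_self {ℓ : ℕ} (hℓ : 2 ≤ ℓ) (A B : R) (e : ℕ → R) :
    coeff ℓ (riccatiDefect ℓ A B (mk e)) = -∑ t ∈ range ℓ, e t * e (ℓ - 1 - t) := by
  obtain ⟨n, rfl⟩ : ∃ n, ℓ = n + 1 := ⟨ℓ - 1, by omega⟩
  rw [coeff_succ_riccatiDefect, coeff_mk_sq, if_neg (by omega), Nat.add_sub_cancel]
  push_cast
  ring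

theorem coeff_kummerOp (ℓ : ℕ) (A β : R) (M : R⟦X⟧) (n : ℕ) :
    coeff n (kummerOp ℓ A β M)
      = (n + 1) * (n - ℓ) * coeff (n + 1) M - (A + (ℓ - 2 * n) * β) * coeff n M := by
  rw [kummerOp, map_sub, map_sub, map_add, coeff_C_mul, coeff_C_mul, coeff_C_mul,
    coeff_X_mul_derivative, coeff_X_mul_derivative, coeff_derivative]
  ring

end CommRing

section Field

variable {K : Type*} [Field K]

/-- Only `n ≤ ℓ` matters: for `n > ℓ` the factor `j = ℓ` divides by zero. -/
noncomputable def kummerCoeff (ℓ : ℕ) (A β : K) (n : ℕ) : K :=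
  ∏ j ∈ range n, (A + (ℓ - 2 * j) * β) / ((j + 1) * (j - ℓ))

theorem coeff_kummerOp_kummerCoeff_self (ℓ : ℕ) (A β : K) :
    coeff ℓ (kummerOp ℓ A β (mk (kummerCoeff ℓ A β)))
      = -((A - ℓ * β) * kummerCoeff ℓ A β ℓ) := by
  simp only [coeff_kummerOp, coeff_mk]
  ring

variable [CharZero K]

theorem coeff_kummerOp_kummerCoeff_of_lt {ℓ n : ℕ} (hn : n < ℓ) (A β : K) :
    coeff n (kummerOp ℓ A β (mk (kummerCoeff ℓ A β))) = 0 := by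
  have hden : ((n : K) + 1) * (n - ℓ) ≠ 0 := by
    refine mul_ne_zero (by norm_cast) (sub_ne_zero.mpr ?_)
    norm_cast
    omega
  rw [coeff_kummerOp, coeff_mk, coeff_mk, kummerCoeff, prod_range_succ, ← kummerCoeff,
    mul_div_assoc', mul_div_assoc', mul_div_cancel_left₀ _ hden]
  ring

theorem sub_mul_kummerCoeff_self (ℓ : ℕ) (A β : K) :
    (A - ℓ * β) * kummerCoeff ℓ A β ℓ
      = (-1) ^ ℓ / (ℓ.factorial : K) ^ 2 * ∏ j ∈ range (ℓ + 1), (A - (ℓ - 2 * j) * β) := by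
  have hfac : ∏ j ∈ range ℓ, ((j : K) + 1) = ℓ.factorial := by
    exact_mod_cast prod_range_add_one_eq_factorial ℓ
  have hdesc : ∏ j ∈ range ℓ, ((j : K) - ℓ) = (-1) ^ ℓ * ℓ.factorial := by
    rw [show ∏ j ∈ range ℓ, ((j : K) - ℓ) = ∏ j ∈ range ℓ, (-1) * ((ℓ : K) - j) from
        prod_congr rfl fun j _ => by ring,
      prod_mul_distrib, prod_const, card_range, ← descPochhammer_eval_eq_prod_range,
      descPochhammer_eval_eq_descFactorial, Nat.descFactorial_self]
  have hreflect : ∏ j ∈ range (ℓ + 1), (A - (ℓ - 2 * j) * β)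
      = (A - ℓ * β) * ∏ j ∈ range ℓ, (A + (ℓ - 2 * j) * β) := by
    rw [← prod_range_reflect, prod_range_succ, mul_comm, Nat.add_sub_cancel, Nat.sub_self,
      Nat.cast_zero]
    congr 1
    · ring
    · refine prod_congr rfl fun j hj => ?_
      rw [Nat.cast_sub (mem_range.mp hj).le]
      ring
  have hsign : ((-1 : K) ^ ℓ) ^ 2 = 1 := by
    rw [← pow_mul, mul_comm, pow_mul]
    simp
  have hfac0 : (ℓ.factorial : K) ≠ 0 := by exact_mod_cast ℓ.factorial_ne_zero
  rw [kummerCoeff, prod_div_distrib, prod_mul_distrib, hfac, hdesc, hreflect]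
  generalize ∏ j ∈ range ℓ, (A + (ℓ - 2 * j) * β) = P
  field_simp
  linear_combination (-(A - ℓ * β) * P) * hsign

theorem X_pow_dvd_of_forall_lt_coeff_eq_zero {ℓ : ℕ} {V W : K⟦X⟧}
    (h : ∀ n < ℓ, coeff n (X * d⁄dX K V - C (ℓ : K) * V - X * W * V) = 0) : X ^ ℓ ∣ V := by
  suffices ∀ n ≤ ℓ, X ^ n ∣ V from this ℓ le_rfl
  intro n
  induction n with
  | zero => simp
  | succ n ih =>
    intro hn
    have hdvd := ih (by omega)
    have hcoeff := h n (by omega)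
    rw [map_sub, map_sub, coeff_X_mul_derivative, coeff_C_mul, mul_assoc,
      coeff_X_mul_of_X_pow_dvd (dvd_mul_of_dvd_right hdvd W), sub_zero, ← sub_mul,
      mul_eq_zero, sub_eq_zero, Nat.cast_inj] at hcoeff
    refine X_pow_dvd_iff.mpr fun m hm => ?_
    rcases Nat.lt_succ_iff_lt_or_eq.mp hm with hm | rfl
    · exact X_pow_dvd_iff.mp hdvd m hm
    · exact hcoeff.resolve_left (by omega)

theorem coeff_riccatiDefect_eq_neg_coeff_kummerOp {ℓ : ℕ} {A β : K} {E M : K⟦X⟧}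
    (hD : X ^ ℓ ∣ riccatiDefect ℓ A (β ^ 2) E) (hM : constantCoeff M = 1)
    (hK : ∀ n < ℓ, coeff n (kummerOp ℓ A β M) = 0) :
    coeff ℓ (riccatiDefect ℓ A (β ^ 2) E) = -coeff ℓ (kummerOp ℓ A β M) := by
  have hlin := riccati_linearization ℓ A β (rfl : (E + C β) * M + d⁄dX K M = _)
  generalize (E + C β) * M + d⁄dX K M = V at hlin
  have hDM : X ^ ℓ ∣ riccatiDefect ℓ A (β ^ 2) E * M := dvd_mul_of_dvd_left hD M
  have hV : X ^ ℓ ∣ V := X_pow_dvd_of_forall_lt_coeff_eq_zero fun n hn => by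
    rw [hlin, map_add, X_pow_dvd_iff.mp hDM n hn, hK n hn, add_zero]
  have hcoeff := congrArg (coeff ℓ) hlin
  rw [map_sub, map_sub, coeff_X_mul_derivative, coeff_C_mul, mul_assoc,
    coeff_X_mul_of_X_pow_dvd (dvd_mul_of_dvd_right hV _), map_add,
    coeff_mul_of_X_pow_dvd hD, hM] at hcoeff
  linear_combination -hcoeff

theorem X_pow_dvd_riccatiDefect_mk {ℓ : ℕ} (hℓ : 2 ≤ ℓ) {A B : K} {e : ℕ → K}
    (h0 : e 0 = A / (ℓ : K))
    (h1 : e 1 = -(A ^ 2 / (ℓ : K) ^ 2 - B) / ((ℓ : K) - 1))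
    (hrec : ∀ k : ℕ, 1 ≤ k → k ≤ ℓ - 2 →
      e (k + 1) = -(1 / ((ℓ : K) - ((k : K) + 1))) * ∑ t ∈ range (k + 1), e t * e (k - t)) :
    X ^ ℓ ∣ riccatiDefect ℓ A B (mk e) := by
  have hℓ0 : (ℓ : K) ≠ 0 := by norm_cast; omega
  refine X_pow_dvd_iff.mpr fun n hn => ?_
  rcases n with _ | _ | k
  · rw [coeff_zero_riccatiDefect, coeff_mk, h0]
    field_simp
    ring
  · have hℓ1 : (ℓ : K) - 1 ≠ 0 := by
      rw [sub_ne_zero]; norm_cast; omega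
    rw [coeff_succ_riccatiDefect, coeff_mk_sq, coeff_mk, if_pos rfl, sum_range_one, h1, h0]
    field_simp
    ring
  · have hℓk : (ℓ : K) - (k + 1 + 1) ≠ 0 := by
      rw [sub_ne_zero]; norm_cast; omega
    rw [coeff_succ_riccatiDefect, coeff_mk_sq, coeff_mk, if_neg k.succ_ne_zero,
      hrec (k + 1) (by omega) (by omega)]
    push_cast
    field_simp
    ring

end Field

end LameTopDegree

open LameTopDegree

theorem stmt2 (ℓ : ℕ) (hℓ : 2 ≤ ℓ) (A B β : ℂ) (hβ : β ^ 2 = B)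
    (e : ℕ → ℂ)
    (h0 : e 0 = A / (ℓ : ℂ))
    (h1 : e 1 = -(A ^ 2 / (ℓ : ℂ) ^ 2 - B) / ((ℓ : ℂ) - 1))
    (hrec : ∀ k : ℕ, 1 ≤ k → k ≤ ℓ - 2 →
      e (k + 1) = -(1 / ((ℓ : ℂ) - ((k : ℂ) + 1)))
        * ∑ t ∈ Finset.range (k + 1), e t * e (k - t)) :
    -∑ t ∈ Finset.range ℓ, e t * e (ℓ - 1 - t)
      = ((-1) ^ ℓ / ((Nat.factorial ℓ : ℂ)) ^ 2)
        * ∏ j ∈ Finset.range (ℓ + 1), (A - ((ℓ : ℂ) - 2 * (j : ℂ)) * β) := by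
  subst hβ
  have hkummer0 : constantCoeff (mk (kummerCoeff ℓ A β)) = 1 := by simp [kummerCoeff]
  rw [← coeff_riccatiDefect_mk_self hℓ A (β ^ 2) e,
    coeff_riccatiDefect_eq_neg_coeff_kummerOp (X_pow_dvd_riccatiDefect_mk hℓ h0 h1 hrec)
      hkummer0 fun n hn => coeff_kummerOp_kummerCoeff_of_lt hn A β,
    coeff_kummerOp_kummerCoeff_self, neg_neg, sub_mul_kummerCoeff_self]
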